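/- Everywhere on ℝ³ and for all t ≥ 0 one has g_t · ḡ_t ≤ e^{−t|f|}, where g_t = (1+tz²κ(tf))^{−1/2}, ḡ_t = (1+tr²κ(−tf))^{−1/2}, f = x²+y²−z², and κ(s) = (1−e^{−2s})/s (κ(0)=2). -/

import Mathlib

/-- f(x,y,z) = x² + y² − z². -/
def fCas (p : ℝ × ℝ × ℝ) : ℝ := p.1 ^ 2 + p.2.1 ^ 2 - p.2.2 ^ 2

/-- The vector field W = −z²x ∂x − z²y ∂y − (x²+y²)z ∂z. -/
def Wfield (p : ℝ × ℝ × ℝ) : ℝ × ℝ × ℝ :=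
  (-(p.2.2 ^ 2) * p.1, -(p.2.2 ^ 2) * p.2.1, -(p.1 ^ 2 + p.2.1 ^ 2) * p.2.2)

/-- κ(s) = ∫₀² e^{−su} du = (1 − e^{−2s})/s, with κ(0) = 2. -/
noncomputable def kap (s : ℝ) : ℝ := ∫ u in (0:ℝ)..2, Real.exp (-(s * u))

/-- g_t = (1 + t z² κ(tf))^{−1/2}. -/
noncomputable def gfun (t : ℝ) (p : ℝ × ℝ × ℝ) : ℝ :=
  1 / Real.sqrt (1 + t * p.2.2 ^ 2 * kap (t * fCas p))

/-- ḡ_t = (1 + t r² κ(−tf))^{−1/2}. -/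
noncomputable def gbar (t : ℝ) (p : ℝ × ℝ × ℝ) : ℝ :=
  1 / Real.sqrt (1 + t * (p.1 ^ 2 + p.2.1 ^ 2) * kap (-(t * fCas p)))

/-- The explicit forward flow of W: (x g_t, y g_t, z ḡ_t). -/
noncomputable def flowW (p : ℝ × ℝ × ℝ) (t : ℝ) : ℝ × ℝ × ℝ :=
  (p.1 * gfun t p, p.2.1 * gfun t p, p.2.2 * gbar t p)

/-! The substitution u ↦ 2 − u gives κ(−s) = e^{2s} κ(s), and with s κ(s) = 1 − e^{−2s} this turns
the radicand of ḡ_t into e^{2tf} times that of g_t, i.e. g_t = e^{tf} ḡ_t. Since for t ≥ 0 both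
radicands are at least 1, 0 ≤ g_t, ḡ_t ≤ 1, hence g_t ḡ_t = e^{−tf} g_t² ≤ e^{−tf} and
g_t ḡ_t = e^{tf} ḡ_t² ≤ e^{tf}. -/

open Real intervalIntegral

lemma kap_nonneg (s : ℝ) : 0 ≤ kap s :=
  integral_nonneg zero_le_two fun _ _ => (exp_pos _).le

lemma mul_kap (s : ℝ) : s * kap s = 1 - exp (-(2 * s)) := by
  have hderiv : ∀ u ∈ Set.uIcc (0 : ℝ) 2,
      HasDerivAt (fun u => -exp (-(s * u))) (s * exp (-(s * u))) u := fun u _ => by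
    have h := ((hasDerivAt_id u).const_mul s).neg.exp.neg
    simp only [Pi.neg_def, id, mul_one, mul_neg, neg_neg] at h
    rwa [mul_comm] at h
  unfold kap
  rw [← integral_const_mul,
    integral_eq_sub_of_hasDerivAt hderiv (Continuous.intervalIntegrable (by fun_prop) _ _),
    mul_zero, neg_zero, exp_zero, mul_comm 2 s]
  ring

lemma kap_neg (s : ℝ) : kap (-s) = exp (2 * s) * kap s := by
  have hflip := integral_comp_sub_left (fun u => exp (s * u)) (a := 0) (b := 2) 2
  rw [sub_self, sub_zero] at hflip
  simp only [kap, neg_mul, neg_neg, ← hflip, ← integral_const_mul, ← exp_add]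
  refine integral_congr fun u _ => ?_
  ring_nf

lemma one_add_mul_kap_neg (s c : ℝ) :
    1 + (s + c) * kap (-s) = exp (2 * s) * (1 + c * kap s) := by
  have hexp : exp (2 * s) * exp (-(2 * s)) = 1 := by rw [← exp_add]; simp
  rw [kap_neg]
  linear_combination exp (2 * s) * mul_kap s - hexp

lemma gfun_eq_exp_mul_gbar (t : ℝ) (p : ℝ × ℝ × ℝ) :
    gfun t p = exp (t * fCas p) * gbar t p := by
  have hsum : t * (p.1 ^ 2 + p.2.1 ^ 2) = t * fCas p + t * p.2.2 ^ 2 := by unfold fCas; ring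
  have hsqrt : √(exp (2 * (t * fCas p))) = exp (t * fCas p) := by
    rw [two_mul, exp_add, sqrt_mul_self (exp_pos _).le]
  rw [gfun, gbar, hsum, one_add_mul_kap_neg, sqrt_mul (exp_pos _).le, hsqrt, mul_one_div,
    div_mul_cancel_left₀ (exp_pos _).ne', one_div]

lemma one_div_sqrt_one_add_le_one {x : ℝ} (hx : 0 ≤ x) : 1 / √(1 + x) ≤ 1 :=
  div_le_one_of_le₀ (one_le_sqrt.mpr (by linarith)) (sqrt_nonneg _)

lemma gfun_nonneg (t : ℝ) (p : ℝ × ℝ × ℝ) : 0 ≤ gfun t p := by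
  unfold gfun; positivity

lemma gbar_nonneg (t : ℝ) (p : ℝ × ℝ × ℝ) : 0 ≤ gbar t p := by
  unfold gbar; positivity

lemma gfun_le_one {t : ℝ} (ht : 0 ≤ t) (p : ℝ × ℝ × ℝ) : gfun t p ≤ 1 :=
  one_div_sqrt_one_add_le_one (by have := kap_nonneg (t * fCas p); positivity)

lemma gbar_le_one {t : ℝ} (ht : 0 ≤ t) (p : ℝ × ℝ × ℝ) : gbar t p ≤ 1 :=
  one_div_sqrt_one_add_le_one (by have := kap_nonneg (-(t * fCas p)); positivity)

lemma mul_le_exp_neg_abs {a b s : ℝ} (ha₀ : 0 ≤ a) (ha₁ : a ≤ 1) (hb₀ : 0 ≤ b) (hb₁ : b ≤ 1)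
    (hab : a = exp s * b) : a * b ≤ exp (-|s|) := by
  rcases abs_choice s with hs | hs <;> simp only [hs, neg_neg]
  · calc a * b = exp (-s) * a ^ 2 := by rw [hab, exp_neg]; field_simp
      _ ≤ exp (-s) := mul_le_of_le_one_right (exp_pos _).le (pow_le_one₀ ha₀ ha₁)
  · calc a * b = exp s * b ^ 2 := by rw [hab]; ring
      _ ≤ exp s := mul_le_of_le_one_right (exp_pos _).le (pow_le_one₀ hb₀ hb₁)

/-- g_t ḡ_t ≤ e^{−t|f|} for all t ≥ 0 everywhere on ℝ³. -/
theorem gfun_mul_gbar_le (t : ℝ) (ht : 0 ≤ t) (p : ℝ × ℝ × ℝ) :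
    gfun t p * gbar t p ≤ Real.exp (-(t * |fCas p|)) := by
  have habs : t * |fCas p| = |t * fCas p| := by rw [abs_mul, abs_of_nonneg ht]
  rw [habs]
  exact mul_le_exp_neg_abs (gfun_nonneg t p) (gfun_le_one ht p) (gbar_nonneg t p)
    (gbar_le_one ht p) (gfun_eq_exp_mul_gbar t p)
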